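/- arXiv:1601.00703 — 2 statements merged into one kernel-verified Lean document; each statement's English description precedes it below -/
import Mathlib

section
/- With g, s(ξ), K as above and a = α_N/(α_N + 1) ∈ (0,1), there exist positive constants d₁, d₂ (depending only on the aᵢ and αᵢ) such that d₁/(1+ξ)^a ≤ K(ξ) ≤ d₂/(1+ξ)^a for all ξ ≥ 0. -/
set_option maxHeartbeats 1000000


theorem stmt_7 (N : ℕ) (a α : Fin (N + 1) → ℝ)
    (ha : ∀ i, 0 < a i) (hα0 : α 0 = 0) (hαmono : StrictMono α)
    (g : ℝ → ℝ) (hg : ∀ x : ℝ, g x = ∑ i, a i * x ^ (α i))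
    (s : ℝ → ℝ) (hs : ∀ ξ : ℝ, 0 ≤ ξ → 0 ≤ s ξ ∧ s ξ * g (s ξ) = ξ)
    (K : ℝ → ℝ) (hK : ∀ ξ : ℝ, K ξ = 1 / g (s ξ))
    (aN : ℝ) (haN : aN = α (Fin.last N) / (α (Fin.last N) + 1)) :
    ∃ d₁ d₂ : ℝ, 0 < d₁ ∧ 0 < d₂ ∧
      ∀ ξ : ℝ, 0 ≤ ξ → d₁ / (1 + ξ) ^ aN ≤ K ξ ∧ K ξ ≤ d₂ / (1 + ξ) ^ aN := by
  set αL := α (Fin.last N) with hαLdef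
  set aL := a (Fin.last N) with haLdef
  have hαLnn : 0 ≤ αL := by
    rw [← hα0]; exact hαmono.monotone (Fin.zero_le _)
  have hαin : ∀ i, 0 ≤ α i := by
    intro i; rw [← hα0]; exact hαmono.monotone (Fin.zero_le _)
  have hαiL : ∀ i, α i ≤ αL := fun i => hαmono.monotone (Fin.le_last i)
  have hann : 0 ≤ aN := by rw [haN]; positivity
  have haL1 : (αL + 1) * aN = αL := by
    rw [haN]
    field_simp
  set A := ∑ i, a i with hAdef
  have hA : 0 < A := Finset.sum_pos (fun i _ => ha i) Finset.univ_nonempty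
  have haL : 0 < aL := ha _
  -- pointwise properties of g on [0,∞)
  have hg_low0 : ∀ t : ℝ, 0 ≤ t → a 0 ≤ g t := by
    intro t ht
    rw [hg]
    have : a 0 * t ^ (α 0) = a 0 := by rw [hα0, Real.rpow_zero, mul_one]
    calc a 0 = a 0 * t ^ (α 0) := this.symm
      _ ≤ ∑ i, a i * t ^ (α i) :=
        Finset.single_le_sum (f := fun i => a i * t ^ (α i))
          (fun i _ => mul_nonneg (ha i).le (Real.rpow_nonneg ht _)) (Finset.mem_univ 0)
  have hg_lowL : ∀ t : ℝ, 0 ≤ t → aL * t ^ αL ≤ g t := by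
    intro t ht
    rw [hg]
    exact Finset.single_le_sum (f := fun i => a i * t ^ (α i))
      (fun i _ => mul_nonneg (ha i).le (Real.rpow_nonneg ht _)) (Finset.mem_univ (Fin.last N))
  have hg_up : ∀ t : ℝ, 0 ≤ t → g t ≤ A * (1 + t ^ αL) := by
    intro t ht
    rw [hg, hAdef, Finset.sum_mul]
    refine Finset.sum_le_sum (fun i _ => ?_)
    have hle : t ^ (α i) ≤ 1 + t ^ αL := by
      rcases le_or_gt t 1 with h1 | h1
      · have h2 : t ^ (α i) ≤ 1 := Real.rpow_le_one ht h1 (hαin i)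
        have h3 : 0 ≤ t ^ αL := Real.rpow_nonneg ht _
        linarith
      · have h2 : t ^ (α i) ≤ t ^ αL :=
          Real.rpow_le_rpow_of_exponent_le h1.le (hαiL i)
        linarith
    exact mul_le_mul_of_nonneg_left hle (ha i).le
  have hpow : ∀ t : ℝ, 0 ≤ t → (t ^ (αL + 1)) ^ aN = t ^ αL := by
    intro t ht
    rw [← Real.rpow_mul ht, haL1]
  -- constants
  set c : ℝ := max 1 (1 / aL) with hcdef
  have hc : 0 < c := lt_max_of_lt_left one_pos
  set C : ℝ := A * (1 + c ^ aN) with hCdef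
  have hC : 0 < C := by positivity
  set M : ℝ := max 1 (2 * A) with hMdef
  have hM1 : (1:ℝ) ≤ M := le_max_left _ _
  have hM2 : 2 * A ≤ M := le_max_right _ _
  set c' : ℝ := min (a 0 / (1 + M) ^ aN) (aL / (4 * A) ^ aN) with hc'def
  have hc' : 0 < c' := by
    have h1 : (0:ℝ) < (1 + M) ^ aN := Real.rpow_pos_of_pos (by linarith) _
    have h2 : (0:ℝ) < (4 * A) ^ aN := Real.rpow_pos_of_pos (by linarith) _
    exact lt_min (div_pos (ha 0) h1) (div_pos haL h2)
  refine ⟨1 / C, 1 / c', by positivity, by positivity, fun ξ hξ => ?_⟩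
  obtain ⟨ht, htg⟩ := hs ξ hξ
  set t := s ξ with htdef
  have hgt0 : 0 < g t := lt_of_lt_of_le (ha 0) (hg_low0 t ht)
  have hbase : (0:ℝ) < 1 + ξ := by linarith
  have hpξ : (0:ℝ) < (1 + ξ) ^ aN := Real.rpow_pos_of_pos hbase _
  have hone_le : (1:ℝ) ≤ (1 + ξ) ^ aN := by
    calc (1:ℝ) = 1 ^ aN := (Real.one_rpow _).symm
      _ ≤ (1 + ξ) ^ aN := Real.rpow_le_rpow zero_le_one (by linarith) hann
  -- upper bound on g t : g t ≤ C * (1+ξ)^aN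
  have hup : g t ≤ C * (1 + ξ) ^ aN := by
    have h1 : aL * t ^ (αL + 1) ≤ ξ := by
      rcases eq_or_lt_of_le ht with h0 | h0
      · have hne : αL + 1 ≠ 0 := by intro h; linarith
        rw [← h0, Real.zero_rpow hne]
        simpa using hξ
      · rw [Real.rpow_add_one (ne_of_gt h0)]
        calc aL * (t ^ αL * t) = t * (aL * t ^ αL) := by ring
          _ ≤ t * g t := mul_le_mul_of_nonneg_left (hg_lowL t ht) ht
          _ = ξ := htg
    have h2 : t ^ (αL + 1) ≤ ξ / aL := by
      rw [le_div_iff₀ haL]; linarith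
    have h3 : t ^ αL ≤ (ξ / aL) ^ aN := by
      rw [← hpow t ht]
      exact Real.rpow_le_rpow (Real.rpow_nonneg ht _) h2 hann
    have h4 : ξ / aL ≤ c * (1 + ξ) := by
      have : ξ / aL = ξ * (1 / aL) := by ring
      rw [this]
      calc ξ * (1 / aL) ≤ ξ * c := mul_le_mul_of_nonneg_left (le_max_right _ _) hξ
        _ ≤ (1 + ξ) * c := by nlinarith
        _ = c * (1 + ξ) := by ring
    have h5 : (ξ / aL) ^ aN ≤ c ^ aN * (1 + ξ) ^ aN := by
      calc (ξ / aL) ^ aN ≤ (c * (1 + ξ)) ^ aN :=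
            Real.rpow_le_rpow (by positivity) h4 hann
        _ = c ^ aN * (1 + ξ) ^ aN := Real.mul_rpow hc.le hbase.le
    calc g t ≤ A * (1 + t ^ αL) := hg_up t ht
      _ ≤ A * (1 + c ^ aN * (1 + ξ) ^ aN) := by nlinarith [h3.trans h5]
      _ ≤ A * ((1 + ξ) ^ aN + c ^ aN * (1 + ξ) ^ aN) := by
          have hcp : (0:ℝ) ≤ c ^ aN := Real.rpow_nonneg hc.le _
          nlinarith
      _ = C * (1 + ξ) ^ aN := by rw [hCdef]; ring
  -- lower bound on g t : c' * (1+ξ)^aN ≤ g t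
  have hlow : c' * (1 + ξ) ^ aN ≤ g t := by
    rcases le_or_gt ξ M with hcase | hcase
    · have h1 : (1 + ξ) ^ aN ≤ (1 + M) ^ aN :=
        Real.rpow_le_rpow hbase.le (by linarith) hann
      have h2 : (0:ℝ) < (1 + M) ^ aN := Real.rpow_pos_of_pos (by linarith) _
      calc c' * (1 + ξ) ^ aN ≤ (a 0 / (1 + M) ^ aN) * (1 + M) ^ aN := by
            have := min_le_left (a 0 / (1 + M) ^ aN) (aL / (4 * A) ^ aN)
            have hc'' : c' ≤ a 0 / (1 + M) ^ aN := this
            nlinarith [hpξ, hc'.le]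
        _ = a 0 := by field_simp
        _ ≤ g t := hg_low0 t ht
    · -- ξ > M ≥ 1, show t ≥ 1
      have ht1 : 1 ≤ t := by
        by_contra h
        push_neg at h
        have h2 : t ^ αL ≤ 1 := Real.rpow_le_one ht h.le hαLnn
        have h3 : g t ≤ 2 * A := by
          have := hg_up t ht
          nlinarith
        have : ξ ≤ 2 * A := by
          calc ξ = t * g t := htg.symm
            _ ≤ 1 * g t := mul_le_mul_of_nonneg_right (by linarith) hgt0.le
            _ ≤ 2 * A := by linarith
        linarith
      have ht0 : 0 < t := lt_of_lt_of_le one_pos ht1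
      have htαL : 1 ≤ t ^ αL := by
        calc (1:ℝ) = 1 ^ αL := (Real.one_rpow _).symm
          _ ≤ t ^ αL := Real.rpow_le_rpow zero_le_one ht1 hαLnn
      have h1 : ξ ≤ 2 * A * t ^ (αL + 1) := by
        rw [Real.rpow_add_one (ne_of_gt ht0)]
        calc ξ = t * g t := htg.symm
          _ ≤ t * (A * (1 + t ^ αL)) :=
              mul_le_mul_of_nonneg_left (hg_up t ht) ht0.le
          _ ≤ t * (A * (2 * t ^ αL)) := by
              nlinarith [mul_nonneg (mul_nonneg ht0.le hA.le) (sub_nonneg.2 htαL)]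
          _ = 2 * A * (t ^ αL * t) := by ring
      have h2 : ξ / (2 * A) ≤ t ^ (αL + 1) := by
        rw [div_le_iff₀ (by positivity)]; nlinarith
      have h3 : (ξ / (2 * A)) ^ aN ≤ t ^ αL := by
        rw [← hpow t ht]
        exact Real.rpow_le_rpow (by positivity) h2 hann
      have h4 : (1 + ξ) / (4 * A) ≤ ξ / (2 * A) := by
        rw [div_le_div_iff₀ (by positivity) (by positivity)]
        nlinarith [hM1.trans hcase.le]
      have h5 : ((1 + ξ) / (4 * A)) ^ aN ≤ (ξ / (2 * A)) ^ aN :=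
        Real.rpow_le_rpow (by positivity) h4 hann
      have h6 : ((1 + ξ) / (4 * A)) ^ aN = (1 + ξ) ^ aN / (4 * A) ^ aN :=
        Real.div_rpow hbase.le (by positivity : (0:ℝ) ≤ 4 * A) aN
      have h7 : (0:ℝ) < (4 * A) ^ aN := Real.rpow_pos_of_pos (by positivity) _
      have hc'' : c' ≤ aL / (4 * A) ^ aN := min_le_right _ _
      calc c' * (1 + ξ) ^ aN ≤ (aL / (4 * A) ^ aN) * (1 + ξ) ^ aN :=
            mul_le_mul_of_nonneg_right hc'' hpξ.le
        _ = aL * ((1 + ξ) ^ aN / (4 * A) ^ aN) := by ring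
        _ = aL * ((1 + ξ) / (4 * A)) ^ aN := by rw [h6]
        _ ≤ aL * (ξ / (2 * A)) ^ aN := mul_le_mul_of_nonneg_left h5 haL.le
        _ ≤ aL * t ^ αL := mul_le_mul_of_nonneg_left h3 haL.le
        _ ≤ g t := hg_lowL t ht
  constructor
  · rw [hK ξ, ← htdef]
    have h1 : (1:ℝ) / C / (1 + ξ) ^ aN = 1 / (C * (1 + ξ) ^ aN) := by
      field_simp
    rw [h1]
    exact one_div_le_one_div_of_le hgt0 hup
  · rw [hK ξ, ← htdef]
    have h1 : (1:ℝ) / c' / (1 + ξ) ^ aN = 1 / (c' * (1 + ξ) ^ aN) := by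
      field_simp
    rw [h1]
    exact one_div_le_one_div_of_le (by positivity) hlow
end

section
/- Let yⱼ ≥ 0, κⱼ > 0, sⱼ ≥ rⱼ > 0, ωⱼ ≥ 1 for all j ≥ 0, and A ≥ 1 with y_{j+1} ≤ A^{ωⱼ/κⱼ}(yⱼ^{rⱼ} + yⱼ^{sⱼ})^{1/κⱼ} for all j ≥ 0. Set βⱼ = rⱼ/κⱼ, γⱼ = sⱼ/κⱼ, and assume ᾱ := Σⱼ ωⱼ/κⱼ < ∞ and that the infinite products Πβⱼ and Πγⱼ converge to positive numbers β̄, γ̄. Then for all j ≥ 1, yⱼ ≤ (2A)^{Gⱼ ᾱ} max{ y₀^{γ₀⋯γ_{j-1}}, y₀^{β₀⋯β_{j-1}} }, where Gⱼ = max{1, γ_m γ_{m+1} ⋯ γ_n : 1 ≤ m ≤ n < j}. -/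
/-!
By induction, `y j ≤ (2A)^(E j) * max (y₀^(γ₀⋯γ_{j-1})) (y₀^(β₀⋯β_{j-1}))` with
`E 0 = 0` and `E (j+1) = ω_j/κ_j + γ_j E j`. In one step, bounding the sum by twice the max costs
`2^(1/κ_j) ≤ 2^(ω_j/κ_j)`; and if `b ≤ c` are the current exponents of `y₀` and
`e ∈ [β_j, γ_j]`, both `b e` and `c e` lie in `[b β_j, c γ_j]`, so `y₀^(b e)` and `y₀^(c e)` are
below `max (y₀^(b β_j)) (y₀^(c γ_j))`, whether `y₀ ≤ 1` or not.
Unwinding, `E j = ∑_{i<j} (ω_i/κ_i) γ_{i+1}⋯γ_{j-1} ≤ G_j ᾱ`.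
-/

open Finset Real

lemma rpow_le_max_rpow_of_le_of_le {a p q t : ℝ} (ha : 0 ≤ a) (hp : 0 ≤ p) (hpq : p ≤ q)
    (hqt : q ≤ t) : a ^ q ≤ max (a ^ t) (a ^ p) := by
  rcases le_total a 1 with ha1 | ha1
  · exact le_max_of_le_right (rpow_le_rpow_of_exponent_ge' ha ha1 hp hpq)
  · exact le_max_of_le_left (rpow_le_rpow_of_exponent_le ha1 hqt)

lemma max_rpow_rpow_rpow_le {a b c e β γ : ℝ} (ha : 0 ≤ a) (hb : 0 ≤ b) (hbc : b ≤ c)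
    (hβ : 0 ≤ β) (hβe : β ≤ e) (heγ : e ≤ γ) :
    max (a ^ c) (a ^ b) ^ e ≤ max (a ^ (c * γ)) (a ^ (b * β)) := by
  have hc : 0 ≤ c := hb.trans hbc
  have he : 0 ≤ e := hβ.trans hβe
  rw [rpow_max (by positivity) (by positivity) he, ← rpow_mul ha, ← rpow_mul ha]
  exact max_le
    (rpow_le_max_rpow_of_le_of_le ha (by positivity) (mul_le_mul hbc hβe hβ hc)
      (mul_le_mul_of_nonneg_left heγ hc))
    (rpow_le_max_rpow_of_le_of_le ha (by positivity) (mul_le_mul_of_nonneg_left hβe hb)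
      (mul_le_mul hbc heγ he hc))

lemma le_two_mul_rpow_mul_max_of_le {A ω κ r s x z : ℝ} (hA : 0 ≤ A) (hω : 1 ≤ ω) (hκ : 0 < κ)
    (hx : 0 ≤ x) (h : z ≤ A ^ (ω / κ) * (x ^ r + x ^ s) ^ (1 / κ)) :
    z ≤ (2 * A) ^ (ω / κ) * max (x ^ (r / κ)) (x ^ (s / κ)) := by
  have hsum : (x ^ r + x ^ s) ^ (1 / κ) ≤ 2 ^ (1 / κ) * max (x ^ (r / κ)) (x ^ (s / κ)) :=
    calc (x ^ r + x ^ s) ^ (1 / κ) ≤ (2 * max (x ^ r) (x ^ s)) ^ (1 / κ) := by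
          gcongr; linarith [le_max_left (x ^ r) (x ^ s), le_max_right (x ^ r) (x ^ s)]
      _ = 2 ^ (1 / κ) * max (x ^ (r / κ)) (x ^ (s / κ)) := by
          rw [mul_rpow zero_le_two (by positivity), rpow_max (by positivity) (by positivity)
            (by positivity), ← rpow_mul hx, ← rpow_mul hx, mul_one_div, mul_one_div]
  have htwo : (2 : ℝ) ^ (1 / κ) ≤ 2 ^ (ω / κ) :=
    rpow_le_rpow_of_exponent_le one_le_two (by gcongr)
  calc z ≤ A ^ (ω / κ) * (2 ^ (1 / κ) * max (x ^ (r / κ)) (x ^ (s / κ))) :=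
        h.trans (by gcongr)
    _ ≤ A ^ (ω / κ) * (2 ^ (ω / κ) * max (x ^ (r / κ)) (x ^ (s / κ))) := by gcongr
    _ = (2 * A) ^ (ω / κ) * max (x ^ (r / κ)) (x ^ (s / κ)) := by
        rw [mul_rpow zero_le_two hA]; ring

def discountedSum (a g : ℕ → ℝ) (j : ℕ) : ℝ :=
  ∑ i ∈ range j, a i * ∏ l ∈ Ico (i + 1) j, g l

section discountedSum

variable {a g : ℕ → ℝ}

lemma discountedSum_succ (j : ℕ) :
    discountedSum a g (j + 1) = a j + g j * discountedSum a g j := by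
  have hshift : ∀ i ∈ range j, a i * ∏ l ∈ Ico (i + 1) (j + 1), g l
      = g j * (a i * ∏ l ∈ Ico (i + 1) j, g l) := fun i hi => by
    rw [prod_Ico_succ_top (mem_range.mp hi)]; ring
  rw [discountedSum, sum_range_succ, sum_congr rfl hshift, ← mul_sum, Ico_self, prod_empty,
    discountedSum]
  ring

lemma discountedSum_nonneg (ha : ∀ i, 0 ≤ a i) (hg : ∀ i, 0 ≤ g i) (j : ℕ) :
    0 ≤ discountedSum a g j :=
  sum_nonneg fun i _ => mul_nonneg (ha i) (prod_nonneg fun l _ => hg l)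

lemma discountedSum_le_mul_of_hasSum {α K : ℝ} {j : ℕ} (ha : ∀ i, 0 ≤ a i) (hα : HasSum a α)
    (hK : 0 ≤ K) (hg : ∀ i < j, ∏ l ∈ Ico (i + 1) j, g l ≤ K) :
    discountedSum a g j ≤ K * α :=
  calc discountedSum a g j ≤ ∑ i ∈ range j, a i * K :=
        sum_le_sum fun i hi => mul_le_mul_of_nonneg_left (hg i (mem_range.mp hi)) (ha i)
    _ = K * ∑ i ∈ range j, a i := by rw [← sum_mul, mul_comm]
    _ ≤ K * α := mul_le_mul_of_nonneg_left (sum_le_hasSum _ (fun i _ => ha i) hα) hK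

end discountedSum

theorem le_rpow_discountedSum_mul_max {y a β γ : ℕ → ℝ} {D : ℝ} (hD : 1 ≤ D)
    (hy : ∀ j, 0 ≤ y j) (ha : ∀ j, 0 ≤ a j) (hβ : ∀ j, 0 ≤ β j) (hβγ : ∀ j, β j ≤ γ j)
    (hstep : ∀ j, y (j + 1) ≤ D ^ a j * max (y j ^ β j) (y j ^ γ j)) (j : ℕ) :
    y j ≤ D ^ discountedSum a γ j *
      max (y 0 ^ ∏ i ∈ range j, γ i) (y 0 ^ ∏ i ∈ range j, β i) := by
  induction j with
  | zero => simp [discountedSum]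
  | succ j ih =>
    set E := discountedSum a γ j
    set b := ∏ i ∈ range j, β i
    set c := ∏ i ∈ range j, γ i
    have hM : 0 ≤ max (y 0 ^ c) (y 0 ^ b) := le_max_of_le_left (rpow_nonneg (hy 0) c)
    have hγ : ∀ i, 0 ≤ γ i := fun i => (hβ i).trans (hβγ i)
    have hE : 0 ≤ E := discountedSum_nonneg ha hγ j
    have hb : 0 ≤ b := prod_nonneg fun i _ => hβ i
    have hbc : b ≤ c := prod_le_prod (fun i _ => hβ i) fun i _ => hβγ i
    have hpow : ∀ e, β j ≤ e → e ≤ γ j →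
        y j ^ e ≤ D ^ (E * γ j) * max (y 0 ^ (c * γ j)) (y 0 ^ (b * β j)) := fun e hβe heγ =>
      have he : 0 ≤ e := (hβ j).trans hβe
      calc y j ^ e ≤ (D ^ E * max (y 0 ^ c) (y 0 ^ b)) ^ e := rpow_le_rpow (hy j) ih he
        _ = D ^ (E * e) * max (y 0 ^ c) (y 0 ^ b) ^ e := by
            rw [mul_rpow (by positivity) hM, ← rpow_mul (by positivity)]
        _ ≤ D ^ (E * γ j) * max (y 0 ^ (c * γ j)) (y 0 ^ (b * β j)) :=
            mul_le_mul (rpow_le_rpow_of_exponent_le hD (by gcongr))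
              (max_rpow_rpow_rpow_le (hy 0) hb hbc (hβ j) hβe heγ) (by positivity)
              (by positivity)
    calc y (j + 1) ≤ D ^ a j * max (y j ^ β j) (y j ^ γ j) := hstep j
      _ ≤ D ^ a j * (D ^ (E * γ j) * max (y 0 ^ (c * γ j)) (y 0 ^ (b * β j))) := by
          gcongr
          exact max_le (hpow _ le_rfl (hβγ j)) (hpow _ (hβγ j) le_rfl)
      _ = D ^ (a j + γ j * E) * max (y 0 ^ (c * γ j)) (y 0 ^ (b * β j)) := by
          rw [rpow_add (by linarith), mul_comm (γ j) E, mul_assoc]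
      _ = _ := by rw [discountedSum_succ, prod_range_succ, prod_range_succ]

def blockProducts (g : ℕ → ℝ) (j : ℕ) : Set ℝ :=
  {1} ∪ {x : ℝ | ∃ m n : ℕ, 1 ≤ m ∧ m ≤ n ∧ n < j ∧ x = ∏ i ∈ Finset.Icc m n, g i}

section blockProducts

variable (g : ℕ → ℝ) (j : ℕ)

lemma blockProducts_finite : (blockProducts g j).Finite := by
  refine (Set.finite_singleton 1).union <|
    ((Set.finite_Iio j).prod (Set.finite_Iio j)).image (fun p => ∏ i ∈ Icc p.1 p.2, g i)
      |>.subset ?_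
  rintro x ⟨m, n, -, hmn, hn, rfl⟩
  exact ⟨(m, n), ⟨hmn.trans_lt hn, hn⟩, rfl⟩

lemma one_le_sSup_blockProducts : 1 ≤ sSup (blockProducts g j) :=
  le_csSup (blockProducts_finite g j).bddAbove (Or.inl rfl)

variable {g j}

lemma prod_Ico_le_sSup_blockProducts {i : ℕ} (hi : i < j) :
    ∏ l ∈ Ico (i + 1) j, g l ≤ sSup (blockProducts g j) := by
  obtain ⟨k, rfl⟩ := Nat.exists_eq_add_of_lt hi
  rcases k.eq_zero_or_pos with rfl | hk
  · simpa using one_le_sSup_blockProducts g (i + 1)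
  · refine le_csSup (blockProducts_finite g _).bddAbove (Or.inr ⟨i + 1, i + k, by omega,
      by omega, by omega, ?_⟩)
    rw [Ico_add_one_right_eq_Icc]

end blockProducts

theorem stmt_11_general (y κ r s ω : ℕ → ℝ) (A : ℝ)
    (hy : ∀ j, 0 ≤ y j) (hκ : ∀ j, 0 < κ j) (hr : ∀ j, 0 < r j) (hrs : ∀ j, r j ≤ s j)
    (hω : ∀ j, 1 ≤ ω j) (hA : 1 ≤ A)
    (hiter : ∀ j, y (j + 1) ≤ A ^ (ω j / κ j) * (y j ^ r j + y j ^ s j) ^ (1 / κ j))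
    (β γ : ℕ → ℝ) (hβ : ∀ j, β j = r j / κ j) (hγ : ∀ j, γ j = s j / κ j)
    (αbar : ℝ) (hαbar : HasSum (fun j => ω j / κ j) αbar)
    (G : ℕ → ℝ)
    (hG : ∀ j, G j = sSup ({1} ∪ {x : ℝ | ∃ m n : ℕ, 1 ≤ m ∧ m ≤ n ∧ n < j ∧
      x = ∏ i ∈ Finset.Icc m n, γ i})) :
    ∀ j : ℕ, 1 ≤ j →
      y j ≤ (2 * A) ^ (G j * αbar) *
        max (y 0 ^ (∏ i ∈ Finset.range j, γ i)) (y 0 ^ (∏ i ∈ Finset.range j, β i)) := by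
  intro j _
  obtain rfl : β = fun j => r j / κ j := funext hβ
  obtain rfl : γ = fun j => s j / κ j := funext hγ
  have hterm : ∀ i, 0 ≤ ω i / κ i := fun i => div_nonneg (zero_le_one.trans (hω i)) (hκ i).le
  have hG1 : 1 ≤ G j := hG j ▸ one_le_sSup_blockProducts _ j
  have hexp : discountedSum (fun i => ω i / κ i) (fun i => s i / κ i) j ≤ G j * αbar :=
    discountedSum_le_mul_of_hasSum hterm hαbar (by linarith)
      fun i hi => hG j ▸ prod_Ico_le_sSup_blockProducts hi
  calc y j ≤ (2 * A) ^ discountedSum (fun i => ω i / κ i) (fun i => s i / κ i) j *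
        max (y 0 ^ ∏ i ∈ range j, s i / κ i) (y 0 ^ ∏ i ∈ range j, r i / κ i) :=
        le_rpow_discountedSum_mul_max (by linarith) hy hterm (fun i => (div_pos (hr i) (hκ i)).le)
          (fun i => div_le_div_of_nonneg_right (hrs i) (hκ i).le)
          (fun i => le_two_mul_rpow_mul_max_of_le (by linarith) (hω i) (hκ i) (hy i) (hiter i)) j
    _ ≤ (2 * A) ^ (G j * αbar) *
        max (y 0 ^ ∏ i ∈ range j, s i / κ i) (y 0 ^ ∏ i ∈ range j, r i / κ i) :=
        mul_le_mul_of_nonneg_right (rpow_le_rpow_of_exponent_le (by linarith) hexp)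
          (le_max_of_le_left (rpow_nonneg (hy 0) _))

theorem stmt_11 (y κ r s ω : ℕ → ℝ) (A : ℝ)
    (hy : ∀ j, 0 ≤ y j) (hκ : ∀ j, 0 < κ j) (hr : ∀ j, 0 < r j) (hrs : ∀ j, r j ≤ s j)
    (hω : ∀ j, 1 ≤ ω j) (hA : 1 ≤ A)
    (hiter : ∀ j, y (j + 1) ≤ A ^ (ω j / κ j) * (y j ^ r j + y j ^ s j) ^ (1 / κ j))
    (β γ : ℕ → ℝ) (hβ : ∀ j, β j = r j / κ j) (hγ : ∀ j, γ j = s j / κ j)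
    (αbar : ℝ) (hαbar : HasSum (fun j => ω j / κ j) αbar)
    (βbar γbar : ℝ) (hβbar : 0 < βbar) (hγbar : 0 < γbar)
    (hβprod : Filter.Tendsto (fun J => ∏ j ∈ Finset.range J, β j) Filter.atTop (nhds βbar))
    (hγprod : Filter.Tendsto (fun J => ∏ j ∈ Finset.range J, γ j) Filter.atTop (nhds γbar))
    (G : ℕ → ℝ)
    (hG : ∀ j, G j = sSup ({1} ∪ {x : ℝ | ∃ m n : ℕ, 1 ≤ m ∧ m ≤ n ∧ n < j ∧
      x = ∏ i ∈ Finset.Icc m n, γ i})) :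
    ∀ j : ℕ, 1 ≤ j →
      y j ≤ (2 * A) ^ (G j * αbar) *
        max (y 0 ^ (∏ i ∈ Finset.range j, γ i)) (y 0 ^ (∏ i ∈ Finset.range j, β i)) :=
  stmt_11_general y κ r s ω A hy hκ hr hrs hω hA hiter β γ hβ hγ αbar hαbar G hG
end
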